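/- Let (X,d,𝔪) be a metric measure space, p,q ∈ (1,∞) conjugate, Π a family of q-test plans, and f ∈ W^{1,p}_Π(X). Then the set of (Π,p)-weak upper gradients of f is closed under taking minima: if G₁, G₂ are (Π,p)-weak upper gradients of f, then min{G₁,G₂} is a (Π,p)-weak upper gradient of f. Consequently, the 𝔪-a.e. essential infimum |Df|_{Π,p} of all (Π,p)-weak upper gradients of f is itself a (Π,p)-weak upper gradient of f. -/

import Mathlib

open MeasureTheory Set Filter Topology unitInterval
open scoped ENNReal Classical

noncomputable section

variable {X : Type*} [MetricSpace X]

/-- Extension of a curve `γ : [0,1] → X` to `ℝ`, constant outside `[0,1]`. -/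
def curveExt (γ : C(I, X)) (t : ℝ) : X := γ (Set.projIcc 0 1 zero_le_one t)

/-- The curve `γ` has metric speed `v` at time `t`. -/
def HasSpeedAt (γ : C(I, X)) (t v : ℝ) : Prop :=
  Tendsto (fun h : ℝ => dist (curveExt γ (t + h)) (curveExt γ t) / |h|) (𝓝[≠] (0:ℝ)) (𝓝 v)

/-- The metric speed `|γ̇_t|` of the curve `γ` at time `t` (junk value `0` if it does not exist). -/
def speed (γ : C(I, X)) (t : ℝ) : ℝ :=
  if h : ∃ v, HasSpeedAt γ t v then h.choose else 0

/-- `γ` is an absolutely continuous curve: its metric speed exists a.e., is integrable, and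
`d(γ_s, γ_t) ≤ ∫_s^t |γ̇_r| dr`. -/
def IsACCurve (γ : C(I, X)) : Prop :=
  (∀ᵐ t ∂(volume.restrict (Icc (0:ℝ) 1)), ∃ v, HasSpeedAt γ t v) ∧
  IntegrableOn (speed γ) (Icc (0:ℝ) 1) ∧
  ∀ s t : ℝ, s ∈ Icc (0:ℝ) 1 → t ∈ Icc (0:ℝ) 1 → s ≤ t →
    dist (curveExt γ s) (curveExt γ t) ≤ ∫ r in Icc s t, speed γ r

variable [MeasurableSpace C(I, X)]

/-- `π` is a `q`-test plan on `(X, d, 𝔪)`. -/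
structure IsTestPlan [MeasurableSpace X] (𝔪 : Measure X) (q : ℝ≥0∞)
    (π : Measure C(I, X)) : Prop where
  prob : IsProbabilityMeasure π
  conc : ∀ᵐ γ ∂π, IsACCurve γ
  compr : ∃ C : ℝ, 0 < C ∧ ∀ t : I, π.map (fun γ : C(I, X) => γ t) ≤ ENNReal.ofReal C • 𝔪
  energy : (∫⁻ γ, ∫⁻ t in Icc (0:ℝ) 1, ENNReal.ofReal (|speed γ t| ^ q.toReal) ∂volume ∂π) < ⊤

/-- The family of all `q`-test plans on `(X, d, 𝔪)`. -/
def allPlans [MeasurableSpace X] (𝔪 : Measure X) (q : ℝ≥0∞) : Set (Measure C(I, X)) :=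
  {π | IsTestPlan 𝔪 q π}

/-- `π̂ := π ⊗ ℒ¹|_{[0,1]}`. -/
def hatPi (π : Measure C(I, X)) : Measure (C(I, X) × ℝ) :=
  π.prod (volume.restrict (Icc (0:ℝ) 1))

/-- `e_# π̂`, the pushforward of `π̂` under the joint evaluation map `e(γ,t) = γ_t`. -/
def evalPush [MeasurableSpace X] (π : Measure C(I, X)) : Measure X :=
  (hatPi π).map (fun p : C(I, X) × ℝ => curveExt p.1 p.2)

/-- `u` belongs to `W^{1,1}(0,1)` with weak derivative `u'`: `u` has an absolutely continuous
representative `F` on `[0,1]` whose derivative is the integrable function `u'`. -/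
def IsSobolevRep (u u' : ℝ → ℝ) : Prop :=
  IntegrableOn u (Icc (0:ℝ) 1) ∧ IntegrableOn u' (Icc (0:ℝ) 1) ∧
  ∃ F : ℝ → ℝ, (∀ᵐ t ∂(volume.restrict (Icc (0:ℝ) 1)), F t = u t) ∧
    ∀ t ∈ Icc (0:ℝ) 1, F t = F 0 + ∫ r in (0:ℝ)..t, u' r

/-- A choice of weak derivative of `t ↦ f(γ_t)` (junk value `0` if `f ∘ γ ∉ W^{1,1}(0,1)`). -/
def curveDeriv (f : X → ℝ) (γ : C(I, X)) : ℝ → ℝ :=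
  if h : ∃ u', IsSobolevRep (fun s => f (curveExt γ s)) u' then h.choose else fun _ => 0

/-- `G` is a weak upper gradient of `f` along the single plan `π`:
`f ∘ γ ∈ W^{1,1}(0,1)` for `π`-a.e. `γ`, and `|(f∘γ)'_t| ≤ G(γ_t)|γ̇_t|` for `π̂`-a.e. `(γ,t)`. -/
def IsWUGPlan (π : Measure C(I, X)) (f G : X → ℝ) : Prop :=
  (∀ᵐ γ ∂π, ∃ u', IsSobolevRep (fun s => f (curveExt γ s)) u') ∧
  ∀ᵐ p ∂(hatPi π), |curveDeriv f p.1 p.2| ≤ G (curveExt p.1 p.2) * speed p.1 p.2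

/-- `G` is a `(Π,p)`-weak upper gradient of `f`. -/
def IsWUGFamily (Plans : Set (Measure C(I, X))) (f G : X → ℝ) : Prop :=
  ∀ π ∈ Plans, IsWUGPlan π f G

/-- `G` is the minimal `(Π,p)`-weak upper gradient of `f`: it is a `(Π,p)`-weak upper gradient
in `L^p(𝔪)` and is `𝔪`-a.e. smaller than any other such gradient. -/
def IsMinWUG [MeasurableSpace X] (𝔪 : Measure X) (p : ℝ≥0∞)
    (Plans : Set (Measure C(I, X))) (f G : X → ℝ) : Prop :=
  MemLp G p 𝔪 ∧ IsWUGFamily Plans f G ∧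
    ∀ H : X → ℝ, MemLp H p 𝔪 → IsWUGFamily Plans f H → G ≤ᵐ[𝔪] H

/-- `f ∈ W^{1,p}(X)`: `f ∈ L^p(𝔪)` admits a `p`-weak upper gradient in `L^p(𝔪)` along every
`q`-test plan. -/
def MemSobolev [MeasurableSpace X] (𝔪 : Measure X) (p q : ℝ≥0∞) (f : X → ℝ) : Prop :=
  MemLp f p 𝔪 ∧ ∃ G : X → ℝ, MemLp G p 𝔪 ∧ IsWUGFamily (allPlans 𝔪 q) f G

/-- `κ` is a disintegration of `π̂ = π ⊗ ℒ¹|_{[0,1]}` along the evaluation map `e(γ,t) = γ_t`. -/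
def IsDisintegration [MeasurableSpace X] (π : Measure C(I, X))
    (κ : X → Measure (C(I, X) × ℝ)) : Prop :=
  (∀ s : Set (C(I, X) × ℝ), MeasurableSet s → Measurable fun x => κ x s) ∧
  (∀ᵐ x ∂(evalPush π), IsProbabilityMeasure (κ x) ∧
      κ x {p : C(I, X) × ℝ | curveExt p.1 p.2 ≠ x} = 0) ∧
  ∀ s : Set (C(I, X) × ℝ), MeasurableSet s → hatPi π s = ∫⁻ x, κ x s ∂(evalPush π)

/-- `φ[π,f](γ,t) = 𝟙_{|γ̇_t|>0} (f∘γ)'_t / |γ̇_t|` (so that `φ_± = ± φ`). -/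
def phiFn (f : X → ℝ) (γ : C(I, X)) (t : ℝ) : ℝ :=
  if 0 < speed γ t then curveDeriv f γ t / speed γ t else 0

/-- `Φ_±[π,f]` (for `ε = ±1`): the `κ x`-essential supremum of `ε ⬝ φ[π,f]` on
`S_π = {d(e_#π̂)/d𝔪 > 0}`, and `0` elsewhere. -/
def PhiSigned [MeasurableSpace X] (𝔪 : Measure X) (π : Measure C(I, X))
    (κ : X → Measure (C(I, X) × ℝ)) (f : X → ℝ) (ε : ℝ) (x : X) : ℝ :=
  if 0 < (evalPush π).rnDeriv 𝔪 x then
    essSup (fun p : C(I, X) × ℝ => ε * phiFn f p.1 p.2) (κ x)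
  else 0

/-- `Φ[π,f] := max{Φ_+[π,f], Φ_-[π,f]}`. -/
def PhiFn [MeasurableSpace X] (𝔪 : Measure X) (π : Measure C(I, X))
    (κ : X → Measure (C(I, X) × ℝ)) (f : X → ℝ) (x : X) : ℝ :=
  max (PhiSigned 𝔪 π κ f 1 x) (PhiSigned 𝔪 π κ f (-1) x)

/-- `g` is the `𝔪`-essential supremum of the family of functions `F i`. -/
def IsEssSupFamily {Y ι : Type*} [MeasurableSpace Y] (𝔪 : Measure Y)
    (F : ι → Y → ℝ) (g : Y → ℝ) : Prop :=
  AEMeasurable g 𝔪 ∧ (∀ i, F i ≤ᵐ[𝔪] g) ∧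
    ∀ h : Y → ℝ, AEMeasurable h 𝔪 → (∀ i, F i ≤ᵐ[𝔪] h) → g ≤ᵐ[𝔪] h

end

open MeasureTheory Set unitInterval
open scoped ENNReal

/-!
Minimising `G ↦ ∫ arctan G dμ` over the `min`-closed family of weak upper gradients, for a
finite measure `μ` equivalent to the σ-finite measure `𝔪`, yields a decreasing sequence of weak
upper gradients converging `𝔪`-a.e. to the essential infimum `D`. Since a test plan has bounded
compression, `𝔪`-a.e. statements hold at `γ_t` for `π̂`-a.e. `(γ, t)`, so the upper gradient
inequality passes to the limit. Finally `G + n min(G, 0)` is a weak upper gradient whenever `G`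
is (where `|γ̇_t| > 0` one has `G(γ_t) ≥ 0`), which forces every weak upper gradient, hence `D`,
to be nonnegative; thus `0 ≤ D ≤ G` for any weak upper gradient `G ∈ Lᵖ`, and `D ∈ Lᵖ`.
-/

theorem exists_antitone_mem_tendsto_csInf_image {α : Type*} [SemilatticeInf α] {s : Set α}
    (hs : s.Nonempty) (hinf : ∀ a ∈ s, ∀ b ∈ s, a ⊓ b ∈ s) {J : α → ℝ} (hJ : MonotoneOn J s)
    (hbdd : BddBelow (J '' s)) :
    ∃ g : ℕ → α, Antitone g ∧ (∀ n, g n ∈ s) ∧ Tendsto (J ∘ g) atTop (𝓝 (sInf (J '' s))) := by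
  obtain ⟨u, -, hu, hus⟩ := exists_seq_tendsto_sInf (hs.image J) hbdd
  choose a has hau using hus
  let g n := (Finset.range (n + 1)).inf' Finset.nonempty_range_add_one a
  have hgs : ∀ n, g n ∈ s := fun n => Finset.inf'_induction _ _ hinf fun i _ => has i
  refine ⟨g, fun m n hmn => Finset.inf'_mono _ (Finset.range_subset_range.2 (by omega)) _, hgs,
    tendsto_of_tendsto_of_tendsto_of_le_of_le tendsto_const_nhds hu
      (fun n => csInf_le hbdd (mem_image_of_mem J (hgs n))) fun n => ?_⟩
  calc J (g n) ≤ J (a n) := hJ (hgs n) (has n) (Finset.inf'_le _ (by simp))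
    _ = u n := hau n

section ArctanIntegral

open Real

variable {Y : Type*} [MeasurableSpace Y] {μ : Measure Y} [IsFiniteMeasure μ]

theorem norm_arctan_le (x : ℝ) : ‖arctan x‖ ≤ π / 2 :=
  abs_le.2 ⟨(neg_pi_div_two_lt_arctan x).le, (arctan_lt_pi_div_two x).le⟩

theorem integrable_arctan_comp {G : Y → ℝ} (hG : AEStronglyMeasurable G μ) :
    Integrable (fun x => arctan (G x)) μ :=
  .of_bound (continuous_arctan.comp_aestronglyMeasurable hG) _
    (.of_forall fun _ => norm_arctan_le _)

theorem tendsto_integral_arctan_of_tendsto_ae {G : ℕ → Y → ℝ} {L : Y → ℝ}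
    (hG : ∀ n, AEStronglyMeasurable (G n) μ)
    (hGL : ∀ᵐ x ∂μ, Tendsto (fun n => G n x) atTop (𝓝 (L x))) :
    Tendsto (fun n => ∫ x, arctan (G n x) ∂μ) atTop (𝓝 (∫ x, arctan (L x) ∂μ)) :=
  tendsto_integral_of_dominated_convergence (fun _ => π / 2)
    (fun n => (continuous_arctan.comp_aestronglyMeasurable (hG n))) (integrable_const _)
    (fun _ => .of_forall fun _ => norm_arctan_le _)
    (hGL.mono fun _ hx => (continuous_arctan.tendsto _).comp hx)

theorem ae_le_of_integral_arctan_le_integral_arctan_min {L H : Y → ℝ}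
    (hL : AEStronglyMeasurable L μ) (hH : AEStronglyMeasurable H μ)
    (h : ∫ x, arctan (L x) ∂μ ≤ ∫ x, arctan (min (L x) (H x)) ∂μ) : L ≤ᵐ[μ] H := by
  have hmono : (fun x => arctan (min (L x) (H x))) ≤ᵐ[μ] fun x => arctan (L x) :=
    .of_forall fun x => arctan_strictMono.monotone (min_le_left _ _)
  have heq := (integral_eq_iff_of_ae_le (integrable_arctan_comp (hL.inf hH))
    (integrable_arctan_comp hL) hmono).1 (le_antisymm (integral_mono_ae
      (integrable_arctan_comp (hL.inf hH)) (integrable_arctan_comp hL) hmono) h)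
  filter_upwards [heq] with x hx
  exact min_eq_left_iff.1 (arctan_injective hx)

theorem exists_seq_mem_tendsto_ae_lowerBound {𝓕 : Set (Y → ℝ)} (hne : 𝓕.Nonempty)
    (hmeas : ∀ G ∈ 𝓕, AEStronglyMeasurable G μ) (hmin : ∀ G₁ ∈ 𝓕, ∀ G₂ ∈ 𝓕, G₁ ⊓ G₂ ∈ 𝓕)
    {D : Y → ℝ} (hlb : ∀ G ∈ 𝓕, D ≤ᵐ[μ] G) :
    ∃ (G : ℕ → Y → ℝ) (L : Y → ℝ), (∀ n, G n ∈ 𝓕) ∧ AEMeasurable L μ ∧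
      (∀ᵐ x ∂μ, Tendsto (fun n => G n x) atTop (𝓝 (L x))) ∧ ∀ H ∈ 𝓕, L ≤ᵐ[μ] H := by
  set J : (Y → ℝ) → ℝ := fun G => ∫ x, arctan (G x) ∂μ
  have hJmono : MonotoneOn J 𝓕 := fun G hG H hH hGH =>
    integral_mono (integrable_arctan_comp (hmeas G hG)) (integrable_arctan_comp (hmeas H hH))
      fun x => arctan_strictMono.monotone (hGH x)
  have hJbdd : BddBelow (J '' 𝓕) := by
    refine ⟨-(π / 2 * μ.real univ), forall_mem_image.2 fun G _ => ?_⟩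
    exact neg_le_of_abs_le
      (norm_integral_le_of_norm_le_const (.of_forall fun _ => norm_arctan_le _))
  obtain ⟨G, hanti, hG𝓕, hJG⟩ := exists_antitone_mem_tendsto_csInf_image hne hmin hJmono hJbdd
  set L : Y → ℝ := fun x => ⨅ n, G n x
  have hGmeas n : AEStronglyMeasurable (G n) μ := hmeas _ (hG𝓕 n)
  have hL : AEMeasurable L μ := AEMeasurable.iInf fun n => (hGmeas n).aemeasurable
  have hGL : ∀ᵐ x ∂μ, Tendsto (fun n => G n x) atTop (𝓝 (L x)) := by
    filter_upwards [ae_all_iff.2 fun n => hlb _ (hG𝓕 n)] with x hx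
    exact tendsto_atTop_ciInf (fun m n h => hanti h x) ⟨D x, forall_mem_range.2 hx⟩
  have hJL : J L = sInf (J '' 𝓕) :=
    tendsto_nhds_unique (tendsto_integral_arctan_of_tendsto_ae hGmeas hGL) hJG
  refine ⟨G, L, hG𝓕, hL, hGL, fun H hH => ?_⟩
  refine ae_le_of_integral_arctan_le_integral_arctan_min hL.aestronglyMeasurable (hmeas H hH) ?_
  change J L ≤ J (L ⊓ H)
  rw [hJL]
  exact ge_of_tendsto'
    (tendsto_integral_arctan_of_tendsto_ae (fun n => (hGmeas n).inf (hmeas H hH))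
      (hGL.mono fun _ hx => hx.min tendsto_const_nhds))
    fun n => csInf_le hJbdd ⟨_, hmin _ (hG𝓕 n) H hH, rfl⟩

end ArctanIntegral

theorem exists_seq_mem_tendsto_ae_essInf {Y : Type*} [MeasurableSpace Y] {𝔪 : Measure Y}
    [SigmaFinite 𝔪] {𝓕 : Set (Y → ℝ)} (hne : 𝓕.Nonempty)
    (hmeas : ∀ G ∈ 𝓕, AEStronglyMeasurable G 𝔪) (hmin : ∀ G₁ ∈ 𝓕, ∀ G₂ ∈ 𝓕, G₁ ⊓ G₂ ∈ 𝓕)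
    {D : Y → ℝ} (hlb : ∀ G ∈ 𝓕, D ≤ᵐ[𝔪] G)
    (hmax : ∀ D' : Y → ℝ, AEMeasurable D' 𝔪 → (∀ G ∈ 𝓕, D' ≤ᵐ[𝔪] G) → D' ≤ᵐ[𝔪] D) :
    ∃ G : ℕ → Y → ℝ, (∀ n, G n ∈ 𝓕) ∧ ∀ᵐ x ∂𝔪, Tendsto (fun n => G n x) atTop (𝓝 (D x)) := by
  obtain ⟨μ, _, h𝔪μ, hμ𝔪⟩ := exists_isFiniteMeasure_absolutelyContinuous 𝔪
  obtain ⟨G, L, hG𝓕, hL, hGL, hLlb⟩ := exists_seq_mem_tendsto_ae_lowerBound hne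
    (fun G hG => (hmeas G hG).mono_ac hμ𝔪) hmin fun G hG => hμ𝔪.ae_le (hlb G hG)
  have hGL' := h𝔪μ.ae_le hGL
  have hLD : L ≤ᵐ[𝔪] D := hmax L (hL.mono_ac h𝔪μ) fun H hH => h𝔪μ.ae_le (hLlb H hH)
  refine ⟨G, hG𝓕, ?_⟩
  filter_upwards [hGL', hLD, ae_all_iff.2 fun n => hlb _ (hG𝓕 n)] with x hx hLx hDx
  rwa [le_antisymm hLx (ge_of_tendsto' hx hDx)] at hx

theorem ae_nonneg_of_forall_ae_le_add_mul_min_zero {Y : Type*} [MeasurableSpace Y]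
    {𝔪 : Measure Y} {D G : Y → ℝ} (h : ∀ n : ℕ, D ≤ᵐ[𝔪] fun x => G x + n * min (G x) 0) :
    ∀ᵐ x ∂𝔪, 0 ≤ G x := by
  filter_upwards [ae_all_iff.2 h] with x hx
  by_contra! hneg
  obtain ⟨n, hn⟩ := exists_nat_gt ((G x - D x) / -G x)
  have hDx := hx n
  rw [min_eq_left hneg.le] at hDx
  rw [div_lt_iff₀ (neg_pos.2 hneg)] at hn
  linarith

section WeakUpperGradient

variable {X : Type*} [MetricSpace X]

theorem speed_nonneg (γ : C(I, X)) (t : ℝ) : 0 ≤ speed γ t := by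
  rw [speed]
  split_ifs with h
  · exact ge_of_tendsto (h.choose_spec : HasSpeedAt γ t h.choose)
      (.of_forall fun _ => by positivity)
  · exact le_rfl

theorem continuous_curveExt : Continuous fun pp : C(I, X) × ℝ => curveExt pp.1 pp.2 :=
  continuous_eval.comp
    (continuous_fst.prodMk ((continuous_projIcc (h := zero_le_one)).comp continuous_snd))

variable [MeasurableSpace C(I, X)]

theorem IsTestPlan.evalPush_absolutelyContinuous [MeasurableSpace X] [BorelSpace X]
    [BorelSpace C(I, X)] {𝔪 : Measure X} {q : ℝ≥0∞} {π : Measure C(I, X)}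
    (hπ : IsTestPlan 𝔪 q π) : evalPush π ≪ 𝔪 := by
  have := hπ.prob
  obtain ⟨C, -, hcompr⟩ := hπ.compr
  refine Measure.AbsolutelyContinuous.mk fun N hN hN0 => ?_
  have hpre := continuous_curveExt.measurable hN
  rw [evalPush, Measure.map_apply continuous_curveExt.measurable hN, hatPi,
    Measure.prod_apply_symm hpre]
  have hslice (t : ℝ) :
      π ((fun γ : C(I, X) => (γ, t)) ⁻¹' ((fun pp : C(I, X) × ℝ => curveExt pp.1 pp.2) ⁻¹' N))
        = 0 := by
    have hle := Measure.le_iff'.1 (hcompr (projIcc 0 1 zero_le_one t)) N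
    rw [Measure.map_apply (continuous_eval_const _).measurable hN, Measure.smul_apply, hN0,
      smul_zero] at hle
    exact nonpos_iff_eq_zero.1 hle
  simp only [hslice, lintegral_zero]

variable {π : Measure C(I, X)} {f : X → ℝ}

theorem IsWUGPlan.add_mul_min_zero {G : X → ℝ} (h : IsWUGPlan π f G) (c : ℝ) :
    IsWUGPlan π f fun x => G x + c * min (G x) 0 := by
  refine ⟨h.1, ?_⟩
  filter_upwards [h.2] with pp hp
  have hGs : 0 ≤ G (curveExt pp.1 pp.2) * speed pp.1 pp.2 := (abs_nonneg _).trans hp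
  have hmin : min (G (curveExt pp.1 pp.2)) 0 * speed pp.1 pp.2 = 0 := by
    rw [min_mul_of_nonneg _ _ (speed_nonneg _ _), zero_mul, min_eq_right hGs]
  rwa [add_mul, mul_assoc, hmin, mul_zero, add_zero]

theorem IsWUGPlan.min {G₁ G₂ : X → ℝ} (h₁ : IsWUGPlan π f G₁) (h₂ : IsWUGPlan π f G₂) :
    IsWUGPlan π f fun x => min (G₁ x) (G₂ x) := by
  refine ⟨h₁.1, ?_⟩
  filter_upwards [h₁.2, h₂.2] with pp hp₁ hp₂
  rw [min_mul_of_nonneg _ _ (speed_nonneg _ _)]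
  exact le_min hp₁ hp₂

theorem IsWUGFamily.min {Plans : Set (Measure C(I, X))} {G₁ G₂ : X → ℝ}
    (h₁ : IsWUGFamily Plans f G₁) (h₂ : IsWUGFamily Plans f G₂) :
    IsWUGFamily Plans f fun x => min (G₁ x) (G₂ x) :=
  fun π hπ => (h₁ π hπ).min (h₂ π hπ)

theorem IsWUGPlan.of_tendsto_ae [MeasurableSpace X] [BorelSpace X] [BorelSpace C(I, X)]
    {𝔪 : Measure X} {q : ℝ≥0∞} (hπ : IsTestPlan 𝔪 q π) {G : ℕ → X → ℝ} {D : X → ℝ}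
    (hG : ∀ n, IsWUGPlan π f (G n))
    (hGD : ∀ᵐ x ∂𝔪, Tendsto (fun n => G n x) atTop (𝓝 (D x))) : IsWUGPlan π f D := by
  refine ⟨(hG 0).1, ?_⟩
  have hGD' : ∀ᵐ pp ∂hatPi π,
      Tendsto (fun n => G n (curveExt pp.1 pp.2)) atTop (𝓝 (D (curveExt pp.1 pp.2))) :=
    ae_of_ae_map continuous_curveExt.aemeasurable (hπ.evalPush_absolutelyContinuous.ae_le hGD)
  filter_upwards [ae_all_iff.2 fun n => (hG n).2, hGD'] with pp hle hlim
  exact ge_of_tendsto' (hlim.mul_const _) hle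

end WeakUpperGradient

theorem min_wug_and_essInf_is_wug_general {X : Type*} [MetricSpace X]
    [TopologicalSpace.SeparableSpace X] [MeasurableSpace X] [BorelSpace X]
    [MeasurableSpace C(I, X)] [BorelSpace C(I, X)]
    (𝔪 : Measure X) (h𝔪 : ∀ (x : X) (r : ℝ), 𝔪 (Metric.closedBall x r) < ⊤)
    (p q : ℝ)
    (Plans : Set (Measure C(I, X))) (hPlans : Plans ⊆ allPlans 𝔪 (ENNReal.ofReal q))
    (f : X → ℝ)
    (hfW : ∃ G : X → ℝ, MemLp G (ENNReal.ofReal p) 𝔪 ∧ IsWUGFamily Plans f G) :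
    (∀ G₁ G₂ : X → ℝ, MemLp G₁ (ENNReal.ofReal p) 𝔪 → MemLp G₂ (ENNReal.ofReal p) 𝔪 →
      IsWUGFamily Plans f G₁ → IsWUGFamily Plans f G₂ →
      IsWUGFamily Plans f fun x => min (G₁ x) (G₂ x)) ∧
    ∀ D : X → ℝ, AEMeasurable D 𝔪 →
      (∀ G : X → ℝ, MemLp G (ENNReal.ofReal p) 𝔪 → IsWUGFamily Plans f G → D ≤ᵐ[𝔪] G) →
      (∀ D' : X → ℝ, AEMeasurable D' 𝔪 →
        (∀ G : X → ℝ, MemLp G (ENNReal.ofReal p) 𝔪 → IsWUGFamily Plans f G → D' ≤ᵐ[𝔪] G) →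
        D' ≤ᵐ[𝔪] D) →
      MemLp D (ENNReal.ofReal p) 𝔪 ∧ IsWUGFamily Plans f D := by
  refine ⟨fun _ _ _ _ h₁ h₂ => h₁.min h₂, fun D hD hDlb hDmax => ?_⟩
  have : IsLocallyFiniteMeasure 𝔪 :=
    ⟨fun x => ⟨_, Metric.closedBall_mem_nhds x one_pos, h𝔪 x 1⟩⟩
  set 𝓕 : Set (X → ℝ) := {G | MemLp G (ENNReal.ofReal p) 𝔪 ∧ IsWUGFamily Plans f G}
  have h𝓕nonneg : ∀ G ∈ 𝓕, ∀ᵐ x ∂𝔪, 0 ≤ G x := fun G hG =>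
    ae_nonneg_of_forall_ae_le_add_mul_min_zero fun n =>
      hDlb _ (hG.1.add ((hG.1.inf MemLp.zero).const_mul n)) fun π hπ =>
        (hG.2 π hπ).add_mul_min_zero n
  have hD0 : ∀ᵐ x ∂𝔪, 0 ≤ D x :=
    hDmax 0 aemeasurable_const fun G hGp hGw => h𝓕nonneg G ⟨hGp, hGw⟩
  obtain ⟨g₀, hg₀⟩ := hfW
  obtain ⟨G, hG𝓕, hGD⟩ := exists_seq_mem_tendsto_ae_essInf (𝓕 := 𝓕) ⟨g₀, hg₀⟩
    (fun G hG => hG.1.aestronglyMeasurable)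
    (fun G₁ h₁ G₂ h₂ => ⟨h₁.1.inf h₂.1, h₁.2.min h₂.2⟩)
    (fun G hG => hDlb G hG.1 hG.2) fun D' hD' h => hDmax D' hD' fun G hGp hGw => h G ⟨hGp, hGw⟩
  refine ⟨hg₀.1.mono' hD.aestronglyMeasurable ?_,
    fun π hπ => .of_tendsto_ae (hPlans hπ) (fun n => (hG𝓕 n).2 π hπ) hGD⟩
  filter_upwards [hD0, hDlb g₀ hg₀.1 hg₀.2] with x hx hle
  rwa [Real.norm_of_nonneg hx]

/-- The set of `(Π,p)`-weak upper gradients of `f ∈ W^{1,p}_Π(X)` is closed under minima;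
consequently, any `𝔪`-a.e. essential infimum of all `(Π,p)`-weak upper gradients of `f` is
itself a `(Π,p)`-weak upper gradient of `f` (and lies in `L^p(𝔪)`). -/
theorem min_wug_and_essInf_is_wug {X : Type*} [MetricSpace X] [CompleteSpace X]
    [TopologicalSpace.SeparableSpace X] [MeasurableSpace X] [BorelSpace X]
    [MeasurableSpace C(I, X)] [BorelSpace C(I, X)]
    (𝔪 : Measure X) (h𝔪 : ∀ (x : X) (r : ℝ), 𝔪 (Metric.closedBall x r) < ⊤)
    (p q : ℝ) (hpq : p.HolderConjugate q)
    (Plans : Set (Measure C(I, X))) (hPlans : Plans ⊆ allPlans 𝔪 (ENNReal.ofReal q))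
    (f : X → ℝ) (hf : MemLp f (ENNReal.ofReal p) 𝔪)
    (hfW : ∃ G : X → ℝ, MemLp G (ENNReal.ofReal p) 𝔪 ∧ IsWUGFamily Plans f G) :
    (∀ G₁ G₂ : X → ℝ, MemLp G₁ (ENNReal.ofReal p) 𝔪 → MemLp G₂ (ENNReal.ofReal p) 𝔪 →
      IsWUGFamily Plans f G₁ → IsWUGFamily Plans f G₂ →
      IsWUGFamily Plans f fun x => min (G₁ x) (G₂ x)) ∧
    ∀ D : X → ℝ, AEMeasurable D 𝔪 →
      (∀ G : X → ℝ, MemLp G (ENNReal.ofReal p) 𝔪 → IsWUGFamily Plans f G → D ≤ᵐ[𝔪] G) →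
      (∀ D' : X → ℝ, AEMeasurable D' 𝔪 →
        (∀ G : X → ℝ, MemLp G (ENNReal.ofReal p) 𝔪 → IsWUGFamily Plans f G → D' ≤ᵐ[𝔪] G) →
        D' ≤ᵐ[𝔪] D) →
      MemLp D (ENNReal.ofReal p) 𝔪 ∧ IsWUGFamily Plans f D :=
  min_wug_and_essInf_is_wug_general 𝔪 h𝔪 p q Plans hPlans f hfW
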